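/- For every integer m ≥ 0, the identity Σ_{ℓ=0}^{n} (−1)^ℓ · e_ℓ(z₁,…,zₙ) · ν_{m+n−ℓ} = 0 holds in R, where e_ℓ denotes the ℓ-th elementary symmetric polynomial in the variables z₁,…,zₙ (with e₀ = 1). -/

import Mathlib

open MvPolynomial Finset

noncomputable section

/-- The variable `z j` in the ring `R = ℂ[z₁,…,zₙ,w₁,…,wₙ]`. -/
def Zv (n : ℕ) (j : Fin n) : MvPolynomial (Fin n ⊕ Fin n) ℂ := X (Sum.inl j)

/-- The variable `w j` (playing the role of `z̄ j`). -/
def Wv (n : ℕ) (j : Fin n) : MvPolynomial (Fin n ⊕ Fin n) ℂ := X (Sum.inr j)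

/-- The `k`-th normalized harmonic moment
`ν_k = (i/4)·Σ_j (w_j − w_{j+1})·Σ_{m=0}^{k−1} z_j^{k−1−m} z_{j+1}^m` (cyclic indices). -/
def nu (n : ℕ) [NeZero n] (k : ℕ) : MvPolynomial (Fin n ⊕ Fin n) ℂ :=
  C (Complex.I / 4) *
    ∑ j : Fin n, (Wv n j - Wv n (j + 1)) *
      ∑ m ∈ Finset.range k, Zv n j ^ (k - 1 - m) * Zv n (j + 1) ^ m

/-- The renamed elementary symmetric polynomial as a multiset esymm. -/
lemma rename_esymm_eq (n : ℕ) (ℓ : ℕ) :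
    MvPolynomial.rename (Sum.inl : Fin n → Fin n ⊕ Fin n)
        (MvPolynomial.esymm (Fin n) ℂ ℓ) =
      (Finset.univ.val.map (Zv n)).esymm ℓ := by
  rw [Finset.esymm_map_val, MvPolynomial.esymm]
  simp [Zv]
  rfl

lemma keyA (n : ℕ) (j : Fin n) :
    ∑ ℓ ∈ Finset.range (n + 1),
      (-1 : MvPolynomial (Fin n ⊕ Fin n) ℂ) ^ ℓ *
        MvPolynomial.rename Sum.inl (MvPolynomial.esymm (Fin n) ℂ ℓ) *
        Zv n j ^ (n - ℓ) = 0 := by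
  have h := Multiset.prod_X_sub_X_eq_sum_esymm (Finset.univ.val.map (Zv n))
  have hcard : Multiset.card (Finset.univ.val.map (Zv n)) = n := by simp
  rw [hcard] at h
  have h2 := congrArg (Polynomial.eval (Zv n j)) h
  rw [Polynomial.eval_multiset_prod, Multiset.map_map] at h2
  simp only [Function.comp, Polynomial.eval_sub, Polynomial.eval_X, Polynomial.eval_C] at h2
  have hz : (Multiset.map (fun x => Zv n j - x) (Multiset.map (Zv n) Finset.univ.val)).prod
      = ∏ i : Fin n, (Zv n j - Zv n i) := by
    rw [Multiset.map_map]; rfl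
  have hz0 : ∏ i : Fin n, (Zv n j - Zv n i) = 0 :=
    Finset.prod_eq_zero (Finset.mem_univ j) (sub_self _)
  rw [hz, hz0] at h2
  rw [Polynomial.eval_finset_sum] at h2
  simp only [Polynomial.eval_mul, Polynomial.eval_pow, Polynomial.eval_neg,
    Polynomial.eval_one, Polynomial.eval_C, Polynomial.eval_X] at h2
  rw [eq_comm] at h2
  calc ∑ ℓ ∈ Finset.range (n + 1),
      (-1 : MvPolynomial (Fin n ⊕ Fin n) ℂ) ^ ℓ *
        MvPolynomial.rename Sum.inl (MvPolynomial.esymm (Fin n) ℂ ℓ) *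
        Zv n j ^ (n - ℓ)
      = ∑ ℓ ∈ Finset.range (n + 1),
        (-1 : MvPolynomial (Fin n ⊕ Fin n) ℂ) ^ ℓ *
          ((Finset.univ.val.map (Zv n)).esymm ℓ * Zv n j ^ (n - ℓ)) := by
        refine Finset.sum_congr rfl fun ℓ _ => ?_
        rw [rename_esymm_eq]; ring
    _ = 0 := h2

lemma keyB (n : ℕ) (j : Fin n) (m : ℕ) :
    ∑ ℓ ∈ Finset.range (n + 1),
      (-1 : MvPolynomial (Fin n ⊕ Fin n) ℂ) ^ ℓ *
        MvPolynomial.rename Sum.inl (MvPolynomial.esymm (Fin n) ℂ ℓ) *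
        Zv n j ^ (m + n - ℓ) = 0 := by
  have : ∀ ℓ ∈ Finset.range (n + 1),
      (-1 : MvPolynomial (Fin n ⊕ Fin n) ℂ) ^ ℓ *
        MvPolynomial.rename Sum.inl (MvPolynomial.esymm (Fin n) ℂ ℓ) *
        Zv n j ^ (m + n - ℓ)
      = Zv n j ^ m * ((-1 : MvPolynomial (Fin n ⊕ Fin n) ℂ) ^ ℓ *
          MvPolynomial.rename Sum.inl (MvPolynomial.esymm (Fin n) ℂ ℓ) *
          Zv n j ^ (n - ℓ)) := by
    intro ℓ hℓ
    rw [Finset.mem_range] at hℓ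
    have : m + n - ℓ = m + (n - ℓ) := by omega
    rw [this, pow_add]; ring
  rw [Finset.sum_congr rfl this, ← Finset.mul_sum, keyA, mul_zero]

theorem statement0 (n : ℕ) [NeZero n] (hn : 3 ≤ n) (m : ℕ) :
    ∑ ℓ ∈ Finset.range (n + 1),
      (-1 : MvPolynomial (Fin n ⊕ Fin n) ℂ) ^ ℓ *
        MvPolynomial.rename Sum.inl (MvPolynomial.esymm (Fin n) ℂ ℓ) *
        nu n (m + n - ℓ) = 0 := by
  -- abbreviations
  set E : ℕ → MvPolynomial (Fin n ⊕ Fin n) ℂ :=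
    fun ℓ => MvPolynomial.rename Sum.inl (MvPolynomial.esymm (Fin n) ℂ ℓ) with hE
  have hswap : ∑ ℓ ∈ Finset.range (n + 1),
      (-1 : MvPolynomial (Fin n ⊕ Fin n) ℂ) ^ ℓ * E ℓ * nu n (m + n - ℓ)
      = C (Complex.I / 4) * ∑ j : Fin n, (Wv n j - Wv n (j + 1)) *
          ∑ ℓ ∈ Finset.range (n + 1), (-1 : MvPolynomial (Fin n ⊕ Fin n) ℂ) ^ ℓ * E ℓ *
            ∑ m' ∈ Finset.range (m + n - ℓ),
              Zv n j ^ (m + n - ℓ - 1 - m') * Zv n (j + 1) ^ m' := by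
    simp only [nu, Finset.mul_sum, Finset.sum_mul]
    rw [Finset.sum_comm]
    refine Finset.sum_congr rfl fun j _ => Finset.sum_congr rfl fun ℓ _ => ?_
    exact Finset.sum_congr rfl fun x _ => by ring
  rw [hswap]
  have hinner : ∀ j : Fin n,
      ∑ ℓ ∈ Finset.range (n + 1), (-1 : MvPolynomial (Fin n ⊕ Fin n) ℂ) ^ ℓ * E ℓ *
        ∑ m' ∈ Finset.range (m + n - ℓ),
          Zv n j ^ (m + n - ℓ - 1 - m') * Zv n (j + 1) ^ m' = 0 := by
    intro j
    have hne : Zv n j - Zv n (j + 1) ≠ 0 := by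
      rw [sub_ne_zero, Zv, Zv]
      intro h
      have := MvPolynomial.X_injective h
      have hj : j = j + 1 := Sum.inl.inj this
      have h1 := congrArg Fin.val hj
      rw [Fin.val_add, Fin.val_one'] at h1
      have hjlt := j.isLt
      have hone : 1 % n = 1 := Nat.mod_eq_of_lt (by omega)
      rw [hone] at h1
      rcases Nat.lt_or_ge (j.val + 1) n with hlt | hge
      · rw [Nat.mod_eq_of_lt hlt] at h1; omega
      · have hx : j.val + 1 = n := by omega
        rw [hx, Nat.mod_self] at h1; omega
    apply mul_left_cancel₀ hne
    rw [mul_zero, Finset.mul_sum]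
    have hterm : ∀ ℓ ∈ Finset.range (n + 1),
        (Zv n j - Zv n (j + 1)) * ((-1 : MvPolynomial (Fin n ⊕ Fin n) ℂ) ^ ℓ * E ℓ *
          ∑ m' ∈ Finset.range (m + n - ℓ),
            Zv n j ^ (m + n - ℓ - 1 - m') * Zv n (j + 1) ^ m')
        = (-1 : MvPolynomial (Fin n ⊕ Fin n) ℂ) ^ ℓ * E ℓ * Zv n j ^ (m + n - ℓ)
          - (-1 : MvPolynomial (Fin n ⊕ Fin n) ℂ) ^ ℓ * E ℓ * Zv n (j + 1) ^ (m + n - ℓ) := by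
      intro ℓ _
      have hgeo := geom_sum₂_mul (Zv n (j + 1)) (Zv n j) (m + n - ℓ)
      have hS : ∑ m' ∈ Finset.range (m + n - ℓ),
          Zv n j ^ (m + n - ℓ - 1 - m') * Zv n (j + 1) ^ m'
          = ∑ i ∈ Finset.range (m + n - ℓ),
            Zv n (j + 1) ^ i * Zv n j ^ ((m + n - ℓ) - 1 - i) := by
        refine Finset.sum_congr rfl fun i _ => ?_
        ring
      rw [hS]
      have h2 : (Zv n j - Zv n (j + 1)) *
          ∑ i ∈ Finset.range (m + n - ℓ), Zv n (j + 1) ^ i * Zv n j ^ ((m + n - ℓ) - 1 - i)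
          = Zv n j ^ (m + n - ℓ) - Zv n (j + 1) ^ (m + n - ℓ) := by
        linear_combination -hgeo
      rw [show (Zv n j - Zv n (j + 1)) * ((-1 : MvPolynomial (Fin n ⊕ Fin n) ℂ) ^ ℓ * E ℓ *
          ∑ i ∈ Finset.range (m + n - ℓ), Zv n (j + 1) ^ i * Zv n j ^ ((m + n - ℓ) - 1 - i))
          = (-1 : MvPolynomial (Fin n ⊕ Fin n) ℂ) ^ ℓ * E ℓ *
            ((Zv n j - Zv n (j + 1)) *
              ∑ i ∈ Finset.range (m + n - ℓ), Zv n (j + 1) ^ i * Zv n j ^ ((m + n - ℓ) - 1 - i))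
          by ring, h2]
      ring
    rw [Finset.sum_congr rfl hterm, Finset.sum_sub_distrib, keyB, keyB, sub_zero]
  have : ∀ j : Fin n, (Wv n j - Wv n (j + 1)) *
      (∑ ℓ ∈ Finset.range (n + 1), (-1 : MvPolynomial (Fin n ⊕ Fin n) ℂ) ^ ℓ * E ℓ *
        ∑ m' ∈ Finset.range (m + n - ℓ),
          Zv n j ^ (m + n - ℓ - 1 - m') * Zv n (j + 1) ^ m') = 0 := by
    intro j; rw [hinner, mul_zero]
  rw [Finset.sum_congr rfl (fun j _ => this j), Finset.sum_const, smul_zero, mul_zero]
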